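/- arXiv:0704.2264 — 2 statements merged into one kernel-verified Lean document; each statement's English description precedes it below -/
import Mathlib

section
/- The polynomial Q(x) = x^8 - 17x^7 + 137x^6 - 677x^5 + 2228x^4 - 4969x^3 + 7284x^2 - 6363x + 2509 has a real root in the open interval (1.9026, 1.9027); consequently the chromatic polynomial of X(3,3) has a real root strictly between 1 and 2. -/
/-- The number of proper colorings of `G` with a palette of `k` colors. -/
noncomputable def numColorings {V : Type} [Fintype V] (G : SimpleGraph V) (k : ℕ) : ℕ :=
  Nat.card {f : V → Fin k // ∀ u v, G.Adj u v → f u ≠ f v}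

/-- `P` is the chromatic polynomial of `G`: for every natural number `k`, evaluating `P`
at `k` gives the number of proper `k`-colorings of `G`. -/
def IsChromaticPolynomial {V : Type} [Fintype V] (G : SimpleGraph V) (P : Polynomial ℝ) : Prop :=
  ∀ k : ℕ, P.eval (k : ℝ) = numColorings G k

/-- The adjacency-generating relation of the graph `X(s,t)`: the vertices `v0, v1, v2, v3, v4`
are `Sum.inl 0, …, Sum.inl 4`, the independent set `S` is `Fin s` (as `Sum.inr (Sum.inl _)`)
and the independent set `T` is `Fin t` (as `Sum.inr (Sum.inr _)`).  The edges are: `v1v2`,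
`v3v4`, every vertex of `S` joined to each of `v0, v1, v3`, and every vertex of `T` joined
to each of `v0, v2, v4`. -/
def XAdj (s t : ℕ) (x y : Fin 5 ⊕ Fin s ⊕ Fin t) : Prop :=
  (x = Sum.inl 1 ∧ y = Sum.inl 2) ∨ (x = Sum.inl 3 ∧ y = Sum.inl 4) ∨
    ((∃ i : Fin s, x = Sum.inr (Sum.inl i)) ∧ (y = Sum.inl 0 ∨ y = Sum.inl 1 ∨ y = Sum.inl 3)) ∨
    ((∃ j : Fin t, x = Sum.inr (Sum.inr j)) ∧ (y = Sum.inl 0 ∨ y = Sum.inl 2 ∨ y = Sum.inl 4))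

/-- The graph `X(s,t)`. -/
def graphX (s t : ℕ) : SimpleGraph (Fin 5 ⊕ Fin s ⊕ Fin t) :=
  SimpleGraph.fromRel (XAdj s t)


/-! Colour `v0, …, v4` first: every vertex of `S` then independently avoids the colours of
`v0, v1, v3`, and every vertex of `T` those of `v0, v2, v4`. Summing over the colours of
`v1, v2, v3, v4` with `v1 ≠ v2` and `v3 ≠ v4` imposed by inclusion–exclusion, every sum that occurs
has the shape `∑ b, φ #(insert b s)`, which depends on `s` only through `#s`. This gives
`P(X(s,t), k)` in closed form; for `s = t = 3` it is `k (k - 1) (k - 2) Q(k)`, and `Q` changes sign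
on `(1.9026, 1.9027)`. -/

open Finset Polynomial

section CountingSums

variable {α β γ R : Type*} [CommRing R]

def insertSum (n : R) (φ : ℕ → R) (m : ℕ) : R :=
  m * φ m + (n - m) * φ (m + 1)

theorem sum_comp_card_insert [Fintype γ] [DecidableEq γ] (φ : ℕ → R) (s : Finset γ) :
    ∑ b, φ #(insert b s) = insertSum (Fintype.card γ : R) φ #s := by
  simp_rw [card_insert_eq_ite, apply_ite φ]
  rw [sum_ite, filter_univ_mem, sum_const, sum_const, filter_not, filter_univ_mem,
    ← compl_eq_univ_sdiff, card_compl, nsmul_eq_mul, nsmul_eq_mul, Nat.cast_sub (card_le_univ s),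
    insertSum]

theorem triple_eq_insert_insert [DecidableEq γ] (x a b : γ) :
    ({x, a, b} : Finset γ) = insert b (insert a {x}) := by
  ext
  simp only [mem_insert, mem_singleton]
  tauto

theorem sum_sum_card_triple [Fintype γ] [DecidableEq γ] (ψ : ℕ → R) (x : γ) :
    ∑ a, ∑ b, ψ #({x, a, b} : Finset γ) =
      insertSum (Fintype.card γ : R) (insertSum (Fintype.card γ : R) ψ) 1 := by
  simp_rw [triple_eq_insert_insert, sum_comp_card_insert, card_singleton]

theorem sum_mul_sum_card_triple [Fintype γ] [DecidableEq γ] (ψ χ : ℕ → R) (x : γ) :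
    ∑ a, (∑ b, ψ #({x, a, b} : Finset γ)) * (∑ b, χ #({x, a, b} : Finset γ)) =
      insertSum (Fintype.card γ : R)
        (fun m => insertSum (Fintype.card γ : R) ψ m * insertSum (Fintype.card γ : R) χ m) 1 := by
  simp_rw [triple_eq_insert_insert, sum_comp_card_insert]
  rw [sum_comp_card_insert (fun m => insertSum _ ψ m * insertSum _ χ m), card_singleton]

theorem sum_mul_sum_card_triple' [Fintype γ] [DecidableEq γ] (ψ χ : ℕ → R) (x : γ) :
    ∑ b, (∑ a, ψ #({x, a, b} : Finset γ)) * (∑ a, χ #({x, a, b} : Finset γ)) =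
      insertSum (Fintype.card γ : R)
        (fun m => insertSum (Fintype.card γ : R) ψ m * insertSum (Fintype.card γ : R) χ m) 1 := by
  refine (sum_congr rfl fun b _ => ?_).trans (sum_mul_sum_card_triple ψ χ x)
  congr 1 <;> exact sum_congr rfl fun a _ => by rw [pair_comm]

theorem sum_sum_ite_ne_mul [Fintype α] [DecidableEq α] (u v : α → R) :
    ∑ a, ∑ c, (if a ≠ c then u a * v c else 0) = (∑ a, u a) * (∑ c, v c) - ∑ a, u a * v a := by
  have h : ∀ a c, (if a ≠ c then u a * v c else 0) = u a * v c - if a = c then u a * v c else 0 := by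
    intro a c
    split_ifs <;> simp_all
  simp_rw [h, sum_sub_distrib, sum_ite_eq, mem_univ, if_true, sum_mul_sum]

theorem sum_ite_ne_and_ne_mul [Fintype α] [DecidableEq α] [Fintype β] [DecidableEq β]
    (f g : α → β → R) :
    ∑ a, ∑ c, ∑ b, ∑ d, (if a ≠ c ∧ b ≠ d then f a b * g c d else 0)
      = (∑ a, ∑ b, f a b) * (∑ c, ∑ d, g c d) - ∑ a, (∑ b, f a b) * (∑ d, g a d)
        - ∑ b, (∑ a, f a b) * (∑ c, g c b) + ∑ a, ∑ b, f a b * g a b := by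
  have inner : ∀ a c, ∑ b, ∑ d, (if a ≠ c ∧ b ≠ d then f a b * g c d else 0)
      = (if a ≠ c then (∑ b, f a b) * (∑ d, g c d) else 0)
        - ∑ b, if a ≠ c then f a b * g c b else 0 := by
    intro a c
    by_cases h : a = c
    · simp [h]
    · simpa [h] using sum_sum_ite_ne_mul (f a) (g c)
  have diagonal : ∑ a, ∑ c, ∑ b, (if a ≠ c then f a b * g c b else 0)
      = ∑ b, ((∑ a, f a b) * (∑ c, g c b) - ∑ a, f a b * g a b) := by
    calc _ = ∑ a, ∑ b, ∑ c, (if a ≠ c then f a b * g c b else 0) :=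
          sum_congr rfl fun _ _ => sum_comm
      _ = ∑ b, ∑ a, ∑ c, (if a ≠ c then f a b * g c b else 0) := sum_comm
      _ = _ := by simp_rw [sum_sum_ite_ne_mul]
  simp_rw [inner, sum_sub_distrib, sum_sum_ite_ne_mul, diagonal, sum_sub_distrib]
  rw [sum_comm (f := fun b a => f a b * g a b)]
  ring

end CountingSums

theorem sum_fin_succ_arrow {γ M : Type*} [Fintype γ] [AddCommMonoid M] {n : ℕ}
    (F : (Fin (n + 1) → γ) → M) :
    ∑ g, F g = ∑ a, ∑ h : Fin n → γ, F (Matrix.vecCons a h) := by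
  rw [← (Fin.consEquiv fun _ => γ).sum_comp, Fintype.sum_prod_type]
  rfl

theorem sum_fin_five_arrow {γ M : Type*} [Fintype γ] [AddCommMonoid M]
    (F : γ → γ → γ → γ → γ → M) :
    ∑ g : Fin 5 → γ, F (g 0) (g 1) (g 2) (g 3) (g 4) = ∑ a, ∑ b, ∑ c, ∑ d, ∑ e, F a b c d e := by
  simp [sum_fin_succ_arrow]

theorem Nat.card_sumArrow_subtype {α β γ : Type*} [Fintype α] [DecidableEq α] [Fintype β]
    [Fintype γ] [DecidableEq γ] (P : (α → γ) → Prop) [DecidablePred P]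
    (N : β → (α → γ) → Finset γ) :
    Nat.card {f : α ⊕ β → γ // P (f ∘ Sum.inl) ∧ ∀ b, f (Sum.inr b) ∉ N b (f ∘ Sum.inl)}
      = ∑ g with P g, ∏ b, #(N b g)ᶜ := by
  rw [Nat.card_congr ((Equiv.sumArrowEquivProdArrow α β γ).subtypeEquiv
      (p := fun f => P (f ∘ Sum.inl) ∧ ∀ b, f (Sum.inr b) ∉ N b (f ∘ Sum.inl))
      (q := fun p => P p.1 ∧ ∀ b, p.2 b ∉ N b p.1) fun f => Iff.rfl),
    Nat.card_congr (Equiv.subtypeProdEquivSigmaSubtype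
      fun (g : α → γ) (h : β → γ) => P g ∧ ∀ b, h b ∉ N b g),
    Nat.card_sigma, sum_filter]
  refine sum_congr rfl fun g _ => ?_
  split_ifs with hg
  · simp only [hg, true_and]
    rw [Nat.card_congr (Equiv.subtypePiEquivPi (p := fun b x => x ∉ N b g)), Nat.card_pi]
    simp [card_compl]
  · simp [hg]

theorem SimpleGraph.forall_fromRel_adj_imp_ne_iff {V W : Type*} (r : V → V → Prop) (f : V → W) :
    (∀ u v, (SimpleGraph.fromRel r).Adj u v → f u ≠ f v) ↔ ∀ u v, r u v → u ≠ v → f u ≠ f v := by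
  refine ⟨fun h u v huv hne => h u v ⟨hne, .inl huv⟩, ?_⟩
  rintro h u v ⟨hne, huv | hvu⟩
  · exact h u v huv hne
  · exact (h v u hvu hne.symm).symm

def neighborColors {γ : Type*} [DecidableEq γ] {s t : ℕ} :
    Fin s ⊕ Fin t → (Fin 5 → γ) → Finset γ
  | .inl _, g => {g 0, g 1, g 3}
  | .inr _, g => {g 0, g 2, g 4}

theorem graphX_proper_iff {s t k : ℕ} (f : Fin 5 ⊕ Fin s ⊕ Fin t → Fin k) :
    (∀ u v, (graphX s t).Adj u v → f u ≠ f v) ↔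
      (f (.inl 1) ≠ f (.inl 2) ∧ f (.inl 3) ≠ f (.inl 4)) ∧
        ∀ b, f (.inr b) ∉ neighborColors b (f ∘ Sum.inl) := by
  rw [graphX, SimpleGraph.forall_fromRel_adj_imp_ne_iff]
  simp [XAdj, neighborColors, or_imp, forall_and, Sum.forall, and_assoc]

theorem numColorings_graphX (s t k : ℕ) :
    numColorings (graphX s t) k =
      ∑ g : Fin 5 → Fin k with g 1 ≠ g 2 ∧ g 3 ≠ g 4,
        #({g 0, g 1, g 3}ᶜ : Finset (Fin k)) ^ s * #({g 0, g 2, g 4}ᶜ : Finset (Fin k)) ^ t := by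
  rw [numColorings, Nat.card_congr (Equiv.subtypeEquivRight graphX_proper_iff)]
  refine (Nat.card_sumArrow_subtype (fun g => g 1 ≠ g 2 ∧ g 3 ≠ g 4) neighborColors).trans
    (sum_congr rfl fun g _ => ?_)
  simp [Fintype.prod_sum_type, neighborColors]

/-- `φ e m` counts the colourings of `e` vertices that avoid `m` given colours; the four terms
are the inclusion–exclusion over the conditions `v1 ≠ v2` and `v3 ≠ v4`. -/
def chromaticX {R : Type*} [CommRing R] (s t : ℕ) (n : R) : R :=
  let φ : ℕ → ℕ → R := fun e m => (n - m) ^ e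
  let E := insertSum n
  n * (E (E (φ s)) 1 * E (E (φ t)) 1 - 2 * E (fun m => E (φ s) m * E (φ t) m) 1
    + E (E (fun m => φ s m * φ t m)) 1)

theorem numColorings_graphX_eq_chromaticX (s t k : ℕ) :
    (numColorings (graphX s t) k : ℝ) = chromaticX s t (k : ℝ) := by
  let φ : ℕ → ℕ → ℝ := fun e m => ((k : ℝ) - m) ^ e
  have cast_card_compl : ∀ u : Finset (Fin k), (#uᶜ : ℝ) = k - #u := fun u => by
    rw [eq_sub_iff_add_eq', ← Nat.cast_add, card_add_card_compl, Fintype.card_fin]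
  rw [numColorings_graphX]
  simp only [sum_filter, Nat.cast_sum, Nat.cast_ite, Nat.cast_mul, Nat.cast_pow, Nat.cast_zero,
    cast_card_compl]
  refine (sum_fin_five_arrow fun x a c b d => if a ≠ c ∧ b ≠ d then
    φ s #({x, a, b} : Finset (Fin k)) * φ t #({x, c, d} : Finset (Fin k)) else 0).trans ?_
  simp only [sum_ite_ne_and_ne_mul, sum_sum_card_triple, sum_mul_sum_card_triple,
    sum_mul_sum_card_triple', sum_sum_card_triple (fun m => φ s m * φ t m), Fintype.card_fin,
    sum_const, card_univ, nsmul_eq_mul]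
  rw [chromaticX]
  ring

theorem IsChromaticPolynomial.unique {V : Type} [Fintype V] {G : SimpleGraph V} {P Q : ℝ[X]}
    (hP : IsChromaticPolynomial G P) (hQ : IsChromaticPolynomial G Q) : P = Q :=
  eq_of_infinite_eval_eq P Q <| Set.infinite_of_injective_forall_mem Nat.cast_injective
    fun k => (hP k).trans (hQ k).symm

noncomputable def polyQ : ℝ[X] :=
  X ^ 8 - 17 * X ^ 7 + 137 * X ^ 6 - 677 * X ^ 5 + 2228 * X ^ 4 - 4969 * X ^ 3
    + 7284 * X ^ 2 - 6363 * X + 2509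

theorem chromaticX_three_three (x : ℝ) :
    chromaticX 3 3 x = (X * (X - 1) * (X - 2) * polyQ).eval x := by
  simp only [chromaticX, insertSum, polyQ, eval_mul, eval_sub, eval_add, eval_pow, eval_X,
    eval_one, eval_ofNat]
  push_cast
  ring

theorem isChromaticPolynomial_graphX_three_three :
    IsChromaticPolynomial (graphX 3 3) (X * (X - 1) * (X - 2) * polyQ) := fun k => by
  rw [numColorings_graphX_eq_chromaticX, chromaticX_three_three]

theorem exists_isRoot_polyQ : ∃ x ∈ Set.Ioo (1.9026 : ℝ) 1.9027, polyQ.IsRoot x :=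
  intermediate_value_Ioo' (by norm_num) polyQ.continuousOn
    ⟨by norm_num [polyQ], by norm_num [polyQ]⟩

/-- The polynomial `Q(x) = x^8 - 17x^7 + 137x^6 - 677x^5 + 2228x^4 - 4969x^3 + 7284x^2
- 6363x + 2509` has a real root in the open interval `(1.9026, 1.9027)`; consequently the
chromatic polynomial of `X(3,3)` has a real root strictly between `1` and `2`. -/
theorem Q_has_root_and_X33_has_chromatic_root (P : Polynomial ℝ)
    (hP : IsChromaticPolynomial (graphX 3 3) P) :
    (∃ x : ℝ, 1.9026 < x ∧ x < 1.9027 ∧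
      x ^ 8 - 17 * x ^ 7 + 137 * x ^ 6 - 677 * x ^ 5 + 2228 * x ^ 4 - 4969 * x ^ 3
        + 7284 * x ^ 2 - 6363 * x + 2509 = 0) ∧
    (∃ x : ℝ, 1 < x ∧ x < 2 ∧ P.eval x = 0) := by
  obtain ⟨x, ⟨hx₁, hx₂⟩, hQx⟩ := exists_isRoot_polyQ
  refine ⟨⟨x, hx₁, hx₂, by simpa [polyQ] using hQx⟩, ⟨x, by linarith, by linarith, ?_⟩⟩
  rw [hP.unique isChromaticPolynomial_graphX_three_three, eval_mul, hQx.eq_zero, mul_zero]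
end

section
/- For all odd integers s, t ≥ 3, there exists α > 0 such that the chromatic polynomial of X(s,t) is strictly negative on the interval (1, 1 + α). (This follows because X(s,t) has an odd number of vertices, is connected, and, being 3-connected, has exactly one block, so the root at x = 1 has multiplicity one.) -/
/-!
Colour `v₀, …, v₄` first: each vertex of `S` then has `k - #{c₀, c₁, c₃}` admissible colours and
each vertex of `T` has `k - #{c₀, c₂, c₄}`. Summing over the colours of `v₀, …, v₄`, with
inclusion–exclusion for `c₁ ≠ c₂` and `c₃ ≠ c₄`, gives the chromatic polynomial in closed form.
For `s, t ≥ 1` it factors as `x (x - 1) R(x)`, and for odd `s, t` one finds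
`R(1) = 3 - 2^(s+t) - 2 (2^s - 2) (2^t - 2) < 0`, so `P` is negative just to the right of `1`.
-/

open Finset Polynomial

section Sums

variable {α R : Type*} [Fintype α] [DecidableEq α] [CommRing R]

theorem sum_boole_forall_notMem (ι : Type*) [Fintype ι] [DecidableEq ι] (A : Finset α)
    [DecidablePred fun g : ι → α => ∀ i, g i ∉ A] :
    ∑ g : ι → α, (if ∀ i, g i ∉ A then (1 : R) else 0) =
      ((Fintype.card α : R) - #A) ^ Fintype.card ι := by
  have hpi : ({g | ∀ i, g i ∉ A} : Finset (ι → α)) = Fintype.piFinset fun _ => Aᶜ := by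
    ext g; simp [Fintype.mem_piFinset]
  rw [← natCast_card_filter, hpi, Fintype.card_piFinset, prod_const, card_univ, card_compl,
    Nat.cast_pow, Nat.cast_sub (card_le_univ A)]

theorem sum_sum_boole_and_and {β γ : Type*} [Fintype β] [Fintype γ] (A : Prop) [Decidable A]
    (B : β → Prop) [DecidablePred B] (C : γ → Prop) [DecidablePred C]
    [∀ x y, Decidable (A ∧ B x ∧ C y)] :
    ∑ x, ∑ y, (if A ∧ B x ∧ C y then (1 : R) else 0) =
      if A then (∑ x, if B x then 1 else 0) * (∑ y, if C y then 1 else 0) else 0 := by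
  split_ifs with hA
  · simp only [hA, true_and, sum_mul_sum, ite_zero_mul_ite_zero, mul_one]
  · simp only [hA, false_and, if_false, sum_const_zero]

theorem sum_ite_eq_const (c : α) (u v : R) :
    ∑ d, (if d = c then u else v) = u + (Fintype.card α - 1) * v := by
  rw [Fintype.sum_eq_add_sum_compl c, if_pos rfl,
    sum_congr rfl fun d hd => if_neg (by simpa using hd), sum_const, card_compl, card_singleton,
    nsmul_eq_mul, Nat.cast_sub (Fintype.card_pos_iff.2 ⟨c⟩), Nat.cast_one]

theorem sum_pow_sub_card_insert (A : Finset α) (m : ℕ) :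
    ∑ x, ((Fintype.card α : R) - #(insert x A)) ^ m =
      #A * (Fintype.card α - #A : R) ^ m +
        (Fintype.card α - #A : R) * (Fintype.card α - #A - 1 : R) ^ m := by
  have hterm : ∀ x, ((Fintype.card α : R) - #(insert x A)) ^ m =
      if x ∈ A then (Fintype.card α - #A : R) ^ m else (Fintype.card α - #A - 1 : R) ^ m := by
    intro x
    split_ifs with hx
    · rw [insert_eq_of_mem hx]
    · rw [card_insert_of_notMem hx, Nat.cast_succ, sub_add_eq_sub_sub]
  rw [sum_congr rfl fun x _ => hterm x, sum_ite, sum_const, sum_const, filter_univ_mem,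
    filter_notMem_eq_sdiff, ← compl_eq_univ_sdiff, card_compl, nsmul_eq_mul, nsmul_eq_mul,
    Nat.cast_sub (card_le_univ A)]

theorem sum_ite_ne_and_ne (a b : α → α → R) :
    ∑ w, ∑ x, ∑ y, ∑ z, (if w ≠ x ∧ y ≠ z then a w y * b x z else 0) =
      (∑ w, ∑ y, a w y) * (∑ x, ∑ z, b x z) - ∑ w, (∑ y, a w y) * (∑ z, b w z)
        - ∑ y, (∑ w, a w y) * (∑ x, b x y) + ∑ w, ∑ y, a w y * b w y := by
  have hterm : ∀ w x y z, (if w ≠ x ∧ y ≠ z then a w y * b x z else 0) =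
      a w y * b x z - (if w = x then a w y * b x z else 0) - (if y = z then a w y * b x z else 0)
        + (if w = x then if y = z then a w y * b x z else 0 else 0) := by
    intros; split_ifs <;> simp_all
  simp only [hterm, sum_add_distrib, sum_sub_distrib, sum_ite_irrel, sum_const_zero, sum_ite_eq,
    mem_univ, if_true, sum_mul_sum]
  congr 2
  exact (sum_congr rfl fun w _ => sum_comm).trans sum_comm

theorem sum_ite_ne_and_ne_of_symm {a b : α → α → R} (ha : ∀ x y, a x y = a y x)
    (hb : ∀ x y, b x y = b y x) :
    ∑ w, ∑ x, ∑ y, ∑ z, (if w ≠ x ∧ y ≠ z then a w y * b x z else 0) =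
      (∑ w, ∑ y, a w y) * (∑ x, ∑ z, b x z) - 2 * ∑ w, (∑ y, a w y) * (∑ z, b w z)
        + ∑ w, ∑ y, a w y * b w y := by
  simp only [sum_ite_ne_and_ne, ha _ (_ : α), hb _ (_ : α)]
  ring

end Sums

@[simps]
def finFiveEquiv (β : Type*) : (Fin 5 → β) ≃ β × β × β × β × β where
  toFun c := (c 0, c 1, c 2, c 3, c 4)
  invFun p := ![p.1, p.2.1, p.2.2.1, p.2.2.2.1, p.2.2.2.2]
  left_inv c := by ext i; fin_cases i <;> rfl

theorem SimpleGraph.forall_fromRel_adj_ne_iff {V β : Type*} (r : V → V → Prop) (f : V → β) :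
    (∀ u v, (SimpleGraph.fromRel r).Adj u v → f u ≠ f v) ↔ ∀ u v, r u v → u ≠ v → f u ≠ f v := by
  simp only [SimpleGraph.fromRel_adj]
  refine ⟨fun h u v huv hne => h u v ⟨hne, .inl huv⟩, ?_⟩
  rintro h u v ⟨hne, huv | hvu⟩
  · exact h u v huv hne
  · exact (h v u hvu hne.symm).symm

theorem Polynomial.exists_eval_neg_right_of_eq_mul {P S : ℝ[X]} {c : ℝ} (hP : P = (X - C c) * S)
    (hS : S.eval c < 0) : ∃ α : ℝ, 0 < α ∧ ∀ x : ℝ, c < x → x < c + α → P.eval x < 0 := by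
  obtain ⟨α, hα, hball⟩ := Metric.eventually_nhds_iff.1
    ((S.continuous.tendsto c).eventually_lt_const hS)
  refine ⟨α, hα, fun x hcx hxc => ?_⟩
  rw [hP, eval_mul, eval_sub, eval_X, eval_C]
  refine mul_neg_of_pos_of_neg (sub_pos.2 hcx) (hball ?_)
  rw [Real.dist_eq, abs_of_pos (sub_pos.2 hcx)]
  linarith

theorem graphX_forall_adj_elim_ne_iff {s t : ℕ} {β : Type*} [DecidableEq β] (c : Fin 5 → β)
    (g : Fin s → β) (h : Fin t → β) :
    (∀ u v, (graphX s t).Adj u v → Sum.elim c (Sum.elim g h) u ≠ Sum.elim c (Sum.elim g h) v) ↔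
      (c 1 ≠ c 2 ∧ c 3 ≠ c 4) ∧ (∀ i, g i ∉ ({c 0, c 1, c 3} : Finset β)) ∧
        ∀ j, h j ∉ ({c 0, c 2, c 4} : Finset β) := by
  rw [graphX, SimpleGraph.forall_fromRel_adj_ne_iff]
  simp [XAdj, or_imp, forall_and, eq_comm, and_assoc]

theorem numColorings_graphX_eq_sum (s t k : ℕ) :
    (numColorings (graphX s t) k : ℝ) =
      ∑ c₀ : Fin k, ∑ c₁ : Fin k, ∑ c₂ : Fin k, ∑ c₃ : Fin k, ∑ c₄ : Fin k,
        (if c₁ ≠ c₂ ∧ c₃ ≠ c₄ then ((k : ℝ) - #{c₀, c₁, c₃}) ^ s * ((k : ℝ) - #{c₀, c₂, c₄}) ^ t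
          else 0) := by
  classical
  rw [numColorings, Nat.card_eq_fintype_card, Fintype.card_subtype, natCast_card_filter,
    ← Fintype.sum_equiv ((Equiv.sumArrowEquivProdArrow _ _ _).trans
      ((finFiveEquiv _).prodCongr (Equiv.sumArrowEquivProdArrow _ _ _))).symm
      (fun p => if ∀ u v, (graphX s t).Adj u v →
        Sum.elim ((finFiveEquiv _).symm p.1) (Sum.elim p.2.1 p.2.2) u ≠
          Sum.elim ((finFiveEquiv _).symm p.1) (Sum.elim p.2.1 p.2.2) v then 1 else 0) _
      fun _ => rfl]
  simp only [Fintype.sum_prod_type, graphX_forall_adj_elim_ne_iff, sum_sum_boole_and_and,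
    sum_boole_forall_notMem, Fintype.card_fin, finFiveEquiv_symm_apply, Matrix.cons_val]

namespace GraphX

/-! With `n` colours and a fixed colour `c`, the polynomials `G m`, `H m` and `F m` evaluate
at `n` to `∑ x, (n - #{c, x})^m`, to `∑ x, (n - #{c, d, x})^m` for any `d ≠ c`, and to
`∑ d, ∑ x, (n - #{c, d, x})^m`. -/

noncomputable def G (m : ℕ) : ℝ[X] := (X - 1) ^ m + (X - 1) * (X - 2) ^ m

noncomputable def H (m : ℕ) : ℝ[X] := 2 * (X - 2) ^ m + (X - 2) * (X - 3) ^ m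

noncomputable def F (m : ℕ) : ℝ[X] := G m + (X - 1) * H m

noncomputable def chromaticPoly (s t : ℕ) : ℝ[X] :=
  X * (F s * F t - 2 * (G s * G t + (X - 1) * (H s * H t)) + F (s + t))

variable {α : Type*} [Fintype α] [DecidableEq α]

theorem sum_pow_sub_card_triple (c d : α) (m : ℕ) :
    ∑ x : α, ((Fintype.card α : ℝ) - #{c, d, x}) ^ m =
      if d = c then (G m).eval (Fintype.card α : ℝ) else (H m).eval (Fintype.card α : ℝ) := by
  have hperm : ∀ x : α, ({c, d, x} : Finset α) = insert x {c, d} := by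
    intro x; ext; simp only [mem_insert, mem_singleton]; tauto
  simp only [hperm, sum_pow_sub_card_insert]
  split_ifs with hdc
  · subst hdc
    simp only [insert_eq_self.2 (mem_singleton_self d), card_singleton, G, eval_add, eval_mul,
      eval_pow, eval_sub, eval_X, eval_one, eval_ofNat]
    ring
  · simp only [card_pair (Ne.symm hdc), H, eval_add, eval_mul, eval_pow, eval_sub, eval_X,
      eval_ofNat]
    ring

theorem sum_sum_pow_sub_card_triple (c : α) (m : ℕ) :
    ∑ d : α, ∑ x : α, ((Fintype.card α : ℝ) - #{c, d, x}) ^ m =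
      (F m).eval (Fintype.card α : ℝ) := by
  simp only [sum_pow_sub_card_triple, sum_ite_eq_const, F, eval_add, eval_mul, eval_sub, eval_X,
    eval_one]

theorem sum_mul_sum_pow_sub_card_triple (c : α) (s t : ℕ) :
    ∑ d : α, (∑ x : α, ((Fintype.card α : ℝ) - #{c, d, x}) ^ s) *
        (∑ x : α, ((Fintype.card α : ℝ) - #{c, d, x}) ^ t) =
      (G s * G t + (X - 1) * (H s * H t)).eval (Fintype.card α : ℝ) := by
  simp only [sum_pow_sub_card_triple, ite_mul_ite, sum_ite_eq_const, eval_add, eval_mul, eval_sub,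
    eval_X, eval_one]

theorem sum_colorings_eq_eval_chromaticPoly (s t : ℕ) :
    ∑ c₀ : α, ∑ c₁ : α, ∑ c₂ : α, ∑ c₃ : α, ∑ c₄ : α,
      (if c₁ ≠ c₂ ∧ c₃ ≠ c₄ then
        ((Fintype.card α : ℝ) - #{c₀, c₁, c₃}) ^ s * ((Fintype.card α : ℝ) - #{c₀, c₂, c₄}) ^ t
        else 0) =
      (chromaticPoly s t).eval (Fintype.card α : ℝ) := by
  have hsymm : ∀ (c x y : α) (m : ℕ), ((Fintype.card α : ℝ) - #{c, x, y}) ^ m =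
      ((Fintype.card α : ℝ) - #{c, y, x}) ^ m := by
    intro c x y m; rw [pair_comm]
  simp only [sum_ite_ne_and_ne_of_symm (hsymm _ · · _) (hsymm _ · · _),
    sum_sum_pow_sub_card_triple, sum_mul_sum_pow_sub_card_triple, ← pow_add, sum_const, card_univ,
    nsmul_eq_mul, chromaticPoly, eval_mul, eval_add, eval_sub, eval_X, eval_ofNat]

/-- `G (a + 1) = (X - 1) * g a`. -/
noncomputable def g (a : ℕ) : ℝ[X] := (X - 1) ^ a + (X - 2) ^ (a + 1)

noncomputable def R (a b : ℕ) : ℝ[X] :=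
  (X - 1) * ((g a + H (a + 1)) * (g b + H (b + 1)) - 2 * (g a * g b))
    - 2 * (H (a + 1) * H (b + 1)) + g (a + b + 1) + H (a + b + 2)

theorem chromaticPoly_succ_succ (a b : ℕ) :
    chromaticPoly (a + 1) (b + 1) = (X - C 1) * (X * R a b) := by
  simp only [chromaticPoly, R, F, G, H, g, C_1]
  ring

theorem eval_one_R_two_mul_neg (a b : ℕ) : (R (2 * a) (2 * b)).eval 1 < 0 := by
  simp only [R, g, H, eval_add, eval_sub, eval_mul, eval_pow, eval_X, eval_one, eval_ofNat]
  have ha : (1 : ℝ) ≤ 4 ^ a := one_le_pow₀ (by norm_num)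
  have hb : (1 : ℝ) ≤ 4 ^ b := one_le_pow₀ (by norm_num)
  rw [show 2 * a + 2 * b + 1 + 1 = 2 * (a + b + 1) by ring]
  norm_num [pow_succ, pow_mul, pow_add]
  nlinarith [mul_le_mul ha hb zero_le_one (by positivity)]

end GraphX

theorem isChromaticPolynomial_graphX (s t : ℕ) :
    IsChromaticPolynomial (graphX s t) (GraphX.chromaticPoly s t) := by
  intro k
  have h := GraphX.sum_colorings_eq_eval_chromaticPoly (α := Fin k) s t
  rw [Fintype.card_fin] at h
  rw [numColorings_graphX_eq_sum, h]

theorem chromaticPolynomial_graphX_neg_right_of_one_general (s t : ℕ)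
    (hsodd : Odd s) (htodd : Odd t)
    (P : Polynomial ℝ) (hP : IsChromaticPolynomial (graphX s t) P) :
    ∃ α : ℝ, 0 < α ∧ ∀ x : ℝ, 1 < x → x < 1 + α → P.eval x < 0 := by
  obtain ⟨a, rfl⟩ := hsodd
  obtain ⟨b, rfl⟩ := htodd
  rw [hP.unique (isChromaticPolynomial_graphX _ _)]
  refine Polynomial.exists_eval_neg_right_of_eq_mul (GraphX.chromaticPoly_succ_succ _ _) ?_
  simpa using GraphX.eval_one_R_two_mul_neg a b

/-- For all odd `s, t ≥ 3`, there exists `α > 0` such that the chromatic polynomial of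
`X(s,t)` is strictly negative on the interval `(1, 1 + α)`. -/
theorem chromaticPolynomial_graphX_neg_right_of_one (s t : ℕ) (hs : 3 ≤ s) (ht : 3 ≤ t)
    (hsodd : Odd s) (htodd : Odd t)
    (P : Polynomial ℝ) (hP : IsChromaticPolynomial (graphX s t) P) :
    ∃ α : ℝ, 0 < α ∧ ∀ x : ℝ, 1 < x → x < 1 + α → P.eval x < 0 :=
  chromaticPolynomial_graphX_neg_right_of_one_general s t hsodd htodd P hP
end
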